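/- For the interval [-1,1] ⊂ R and p ≤ -1, the measure μ = (δ_{-1} + δ_{1})/2 maximizes ∫∫ |x-y|^{-p} dμdμ over all probability measures on [-1,1], and the maximum value is 2^{-p-1}; hence Cap_p([-1,1]) = 2^{1+1/p}. -/

import Mathlib

open MeasureTheory ENNReal

/-- Riesz `p`-energy for `p < 0` of a subset of the real line. -/
noncomputable def rieszVneg (p : ℝ) (K : Set ℝ) : ℝ≥0∞ :=
  ⨆ (μ : Measure ℝ) (_ : IsProbabilityMeasure μ) (_ : μ Kᶜ = 0),
    ∫⁻ x, ∫⁻ y, edist x y ^ (-p) ∂μ ∂μ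

/-- Riesz `p`-capacity for `p < 0`. -/
noncomputable def capNeg (p : ℝ) (K : Set ℝ) : ℝ≥0∞ :=
  rieszVneg p K ^ (-1 / p)

/-- The two-point measure `(δ_{-1} + δ_{1})/2` on the real line. -/
noncomputable def twoPointMeasure : Measure ℝ :=
  (2 : ℝ≥0∞)⁻¹ • (Measure.dirac (-1 : ℝ) + Measure.dirac (1 : ℝ))

/-! For `q = -p ≥ 1` and `x, y ∈ [-1, 1]`, `|x - y| ^ q ≤ 2 ^ (q - 1) * |x - y| ≤ 2 ^ (q - 1) * (1 - x y)`,
the last step because `(1 - x y)² - (x - y)² = (1 - x²)(1 - y²) ≥ 0`. Splitting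
`2 (1 - x y) = (1 - x)(1 + y) + (1 + x)(1 - y)` into products of nonnegative factors, the energy of
`ν` is at most `2 ^ (q - 1) * a * b` with `a = ∫ (1 - x) dν` and `b = ∫ (1 + x) dν`; since
`a + b = 2`, `a * b ≤ 1`. The two-point measure attains `2 ^ (q - 1)`. -/

open Set

lemma abs_sub_le_one_sub_mul {x y : ℝ} (hx : x ∈ Icc (-1 : ℝ) 1) (hy : y ∈ Icc (-1 : ℝ) 1) :
    |x - y| ≤ 1 - x * y := by
  obtain ⟨hx₁, hx₂⟩ := hx
  obtain ⟨hy₁, hy₂⟩ := hy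
  rw [abs_le]
  constructor <;> nlinarith

lemma abs_sub_rpow_le {q x y : ℝ} (hq : 1 ≤ q) (hx : x ∈ Icc (-1 : ℝ) 1)
    (hy : y ∈ Icc (-1 : ℝ) 1) :
    |x - y| ^ q ≤ 2 ^ (q - 1) * (1 - x * y) := by
  have hxy : |x - y| ≤ 2 := by
    rw [abs_sub_le_iff]; constructor <;> linarith [hx.1, hx.2, hy.1, hy.2]
  calc |x - y| ^ q = |x - y| ^ (q - 1) * |x - y| := by
        rw [← Real.rpow_add_one' (abs_nonneg _) (by linarith), sub_add_cancel]
    _ ≤ 2 ^ (q - 1) * (1 - x * y) := by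
        gcongr
        exact abs_sub_le_one_sub_mul hx hy

lemma edist_rpow_le {q x y : ℝ} (hq : 1 ≤ q) (hx : x ∈ Icc (-1 : ℝ) 1)
    (hy : y ∈ Icc (-1 : ℝ) 1) :
    edist x y ^ q ≤ 2 ^ (q - 2) * (ENNReal.ofReal (1 - x) * ENNReal.ofReal (1 + y) +
      ENNReal.ofReal (1 + x) * ENNReal.ofReal (1 - y)) := by
  have ⟨hx₁, hx₂⟩ := hx
  have ⟨hy₁, hy₂⟩ := hy
  have h2 : (2 : ℝ≥0∞) ^ (q - 2) = ENNReal.ofReal (2 ^ (q - 2)) := by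
    rw [← ENNReal.ofReal_rpow_of_pos two_pos, ENNReal.ofReal_ofNat]
  rw [edist_dist, Real.dist_eq, ENNReal.ofReal_rpow_of_nonneg (abs_nonneg _) (by linarith), h2,
    ← ENNReal.ofReal_mul (by linarith), ← ENNReal.ofReal_mul (by linarith),
    ← ENNReal.ofReal_add (by nlinarith) (by nlinarith), ← ENNReal.ofReal_mul (by positivity)]
  apply ENNReal.ofReal_le_ofReal
  calc |x - y| ^ q ≤ 2 ^ (q - 1) * (1 - x * y) := abs_sub_rpow_le hq hx hy
    _ = 2 ^ (q - 2) * ((1 - x) * (1 + y) + (1 + x) * (1 - y)) := by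
        rw [show q - 1 = (q - 2) + 1 by ring, Real.rpow_add_one two_ne_zero]
        ring

lemma ENNReal.mul_le_one_of_add_eq_two {a b : ℝ≥0∞} (h : a + b = 2) : a * b ≤ 1 := by
  lift a to NNReal using ne_top_of_le_ne_top ofNat_ne_top (h ▸ le_self_add)
  lift b to NNReal using ne_top_of_le_ne_top ofNat_ne_top (h ▸ le_add_self)
  norm_cast at h ⊢
  have h4 := four_mul_le_sq_add a b
  rw [h, mul_assoc] at h4
  exact le_of_mul_le_mul_left (h4.trans_eq (by norm_num)) four_pos

lemma lintegral_ofReal_one_sub_add_lintegral_ofReal_one_add {ν : Measure ℝ}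
    [IsProbabilityMeasure ν] (hν : ∀ᵐ x ∂ν, x ∈ Icc (-1 : ℝ) 1) :
    ∫⁻ x, ENNReal.ofReal (1 - x) ∂ν + ∫⁻ x, ENNReal.ofReal (1 + x) ∂ν = 2 := by
  rw [← lintegral_add_left (by fun_prop)]
  calc ∫⁻ x, ENNReal.ofReal (1 - x) + ENNReal.ofReal (1 + x) ∂ν = ∫⁻ _, 2 ∂ν := by
        refine lintegral_congr_ae ?_
        filter_upwards [hν] with x ⟨hx₁, hx₂⟩
        rw [← ENNReal.ofReal_add (by linarith) (by linarith)]
        norm_num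
    _ = 2 := by simp

theorem lintegral_lintegral_edist_rpow_le {q : ℝ} (hq : 1 ≤ q) {ν : Measure ℝ}
    [IsProbabilityMeasure ν] (hν : ∀ᵐ x ∂ν, x ∈ Icc (-1 : ℝ) 1) :
    ∫⁻ x, ∫⁻ y, edist x y ^ q ∂ν ∂ν ≤ 2 ^ (q - 1) := by
  set A : ℝ → ℝ≥0∞ := fun t ↦ ENNReal.ofReal (1 - t)
  set B : ℝ → ℝ≥0∞ := fun t ↦ ENNReal.ofReal (1 + t)
  have hA : Measurable A := by fun_prop
  have hB : Measurable B := by fun_prop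
  have hab : (∫⁻ t, A t ∂ν) * ∫⁻ t, B t ∂ν ≤ 1 :=
    mul_le_one_of_add_eq_two (lintegral_ofReal_one_sub_add_lintegral_ofReal_one_add hν)
  have inner (x : ℝ) : ∫⁻ y, A x * B y + B x * A y ∂ν =
      A x * ∫⁻ t, B t ∂ν + B x * ∫⁻ t, A t ∂ν := by
    rw [lintegral_add_left (hB.const_mul _), lintegral_const_mul _ hB, lintegral_const_mul _ hA]
  have hc : (2 : ℝ≥0∞) ^ (q - 2) ≠ ⊤ := by simp
  calc ∫⁻ x, ∫⁻ y, edist x y ^ q ∂ν ∂ν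
      ≤ ∫⁻ x, ∫⁻ y, 2 ^ (q - 2) * (A x * B y + B x * A y) ∂ν ∂ν := by
        refine lintegral_mono_ae ?_
        filter_upwards [hν] with x hx
        refine lintegral_mono_ae ?_
        filter_upwards [hν] with y hy
        exact edist_rpow_le hq hx hy
    _ = 2 ^ (q - 2) * ∫⁻ x, A x * ∫⁻ t, B t ∂ν + B x * ∫⁻ t, A t ∂ν ∂ν := by
        simp_rw [lintegral_const_mul' _ _ hc, inner]
    _ = 2 ^ (q - 2) * (2 * ((∫⁻ t, A t ∂ν) * ∫⁻ t, B t ∂ν)) := by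
        rw [lintegral_add_left (hA.mul_const _), lintegral_mul_const _ hA,
          lintegral_mul_const _ hB, mul_comm (∫⁻ t, B t ∂ν), two_mul]
    _ ≤ 2 ^ (q - 2) * 2 := by grw [hab, mul_one]
    _ = 2 ^ (q - 1) := by
        rw [show q - 1 = (q - 2) + 1 by ring, ENNReal.rpow_add _ _ two_ne_zero ofNat_ne_top,
          ENNReal.rpow_one]

instance : IsProbabilityMeasure twoPointMeasure :=
  ⟨by simp [twoPointMeasure, ENNReal.inv_two_add_inv_two]⟩

lemma lintegral_twoPointMeasure (f : ℝ → ℝ≥0∞) :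
    ∫⁻ x, f x ∂twoPointMeasure = 2⁻¹ * (f (-1) + f 1) := by
  simp [twoPointMeasure, lintegral_smul_measure, lintegral_add_measure, mul_add]

lemma twoPointMeasure_compl_Icc : twoPointMeasure (Icc (-1 : ℝ) 1)ᶜ = 0 := by
  simp [twoPointMeasure, Measure.dirac_apply' _ measurableSet_Icc.compl]

lemma lintegral_lintegral_edist_rpow_twoPointMeasure {q : ℝ} (hq : 0 < q) :
    ∫⁻ x, ∫⁻ y, edist x y ^ q ∂twoPointMeasure ∂twoPointMeasure = 2 ^ (q - 1) := by
  have h2 : edist (-1 : ℝ) 1 ^ q = 2 ^ q := by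
    rw [edist_dist, Real.dist_eq]; norm_num
  simp only [lintegral_twoPointMeasure, edist_self, ENNReal.zero_rpow_of_pos hq, edist_comm (1 : ℝ),
    h2, zero_add, add_zero, ← two_mul, ← mul_assoc,
    ENNReal.inv_mul_cancel two_ne_zero ofNat_ne_top, one_mul]
  rw [ENNReal.rpow_sub _ _ two_ne_zero ofNat_ne_top, ENNReal.rpow_one, div_eq_mul_inv, mul_comm]

lemma rieszVneg_Icc {p : ℝ} (hp : p ≤ -1) : rieszVneg p (Icc (-1) 1) = 2 ^ (-p - 1) := by
  refine le_antisymm (iSup_le fun ν ↦ iSup₂_le fun _ hν ↦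
    lintegral_lintegral_edist_rpow_le (by linarith) (mem_ae_iff.2 hν)) ?_
  rw [← lintegral_lintegral_edist_rpow_twoPointMeasure (by linarith : 0 < -p)]
  exact le_iSup₂_of_le twoPointMeasure inferInstance (le_iSup_of_le twoPointMeasure_compl_Icc le_rfl)

/-- For `p ≤ -1`, the measure `(δ_{-1}+δ_{1})/2` maximizes the
`p`-energy `∫∫ |x-y|^{-p} dμdμ` over probability measures on `[-1,1]`; the maximum
value is `2^{-p-1}`, and hence `Cap_p([-1,1]) = 2^{1+1/p}`. -/
theorem twoPoint_maximizes (p : ℝ) (hp : p ≤ -1) :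
    (∀ ν : Measure ℝ, IsProbabilityMeasure ν → ν (Set.Icc (-1 : ℝ) 1)ᶜ = 0 →
      (∫⁻ x, ∫⁻ y, edist x y ^ (-p) ∂ν ∂ν)
        ≤ ∫⁻ x, ∫⁻ y, edist x y ^ (-p) ∂twoPointMeasure ∂twoPointMeasure) ∧
    (∫⁻ x, ∫⁻ y, edist x y ^ (-p) ∂twoPointMeasure ∂twoPointMeasure)
      = (2 : ℝ≥0∞) ^ (-p - 1) ∧
    capNeg p (Set.Icc (-1 : ℝ) 1) = (2 : ℝ≥0∞) ^ (1 + 1 / p) := by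
  have hE := lintegral_lintegral_edist_rpow_twoPointMeasure (by linarith : 0 < -p)
  refine ⟨fun ν _ hν ↦ hE ▸ lintegral_lintegral_edist_rpow_le (by linarith) (mem_ae_iff.2 hν),
    hE, ?_⟩
  have hp₀ : p ≠ 0 := by linarith
  rw [capNeg, rieszVneg_Icc hp, ← ENNReal.rpow_mul]
  congr 1
  field_simp
  ring
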